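/- Let m ≥ 4 and let Σ = (σ_{ij}) ∈ F_{m,1} have exactly one nonzero off-diagonal entry σ₁₂ (i.e., σ_{gh} = 0 for all off-diagonal (g,h) ≠ (1,2),(2,1)). Let C be the set of symmetric m×m matrices S = (s_{gh}) such that s_{gh} = 0 for all 3 ≤ g < h ≤ m and the 2×(m−2) submatrix S_{{1,2}×{3,…,m}} has rank at most one. Then: (a) every tetrad t_{1g}t_{2h} − t_{1h}t_{2g} (3 ≤ g < h ≤ m) vanishes identically on C and lies in the vanishing ideal of F_{m,1}; (b) for each tetrad t₁₂t_{gh} − t_{1g}t_{2h} with 3 ≤ g < h ≤ m, the lowest-degree term of its translate by Σ is σ₁₂t_{gh}, which vanishes on C. Consequently C is contained in the common zero set of these lowest-degree terms. -/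

import Mathlib

open MvPolynomial

open Matrix in
lemma minor_of_rank_le_one {k : ℕ} (M : Matrix (Fin 2) (Fin k) ℝ) (hr : M.rank ≤ 1)
    (a b : Fin k) : M 0 a * M 1 b - M 0 b * M 1 a = 0 := by
  by_contra hd
  have hA : IsUnit (Matrix.det !![M 0 a, M 0 b; M 1 a, M 1 b]) := by
    rw [Matrix.det_fin_two]
    simpa using isUnit_iff_ne_zero.mpr hd
  have hli : LinearIndependent ℝ (fun i => (!![M 0 a, M 0 b; M 1 a, M 1 b])ᵀ i) :=
    Matrix.linearIndependent_cols_iff_isUnit.mpr ((Matrix.isUnit_iff_isUnit_det _).mpr hA)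
  have hc : (fun i => (!![M 0 a, M 0 b; M 1 a, M 1 b])ᵀ i) = fun i => Mᵀ (![a, b] i) := by
    funext i j
    fin_cases i <;> fin_cases j <;> simp [Matrix.transpose_apply]
  rw [hc] at hli
  have h2 : Module.finrank ℝ (Submodule.span ℝ (Set.range (fun i => Mᵀ (![a, b] i)))) = 2 := by
    rw [finrank_span_eq_card hli]; simp
  have hle : Submodule.span ℝ (Set.range (fun i => Mᵀ (![a, b] i))) ≤
      Submodule.span ℝ (Set.range Mᵀ) :=
    Submodule.span_mono (by rintro x ⟨i, rfl⟩; exact ⟨![a, b] i, rfl⟩)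
  have := Submodule.finrank_mono hle
  rw [h2] at this
  have := this.trans (le_of_eq (Matrix.rank_eq_finrank_span_cols M).symm)
  omega

/-- The one-factor analysis parameter space `F_{m,1}`. -/
def oneFactorSet (m : ℕ) : Set (Matrix (Fin m) (Fin m) ℝ) :=
  {S | ∃ δ Γ : Fin m → ℝ, (∀ i, 0 < δ i) ∧ S = Matrix.diagonal δ + Matrix.vecMulVec Γ Γ}

/-- The set C of symmetric m×m matrices whose lower-right principal block
(indices ≥ 2, 0-based) is diagonal and whose {0,1}×{2,…,m−1} submatrix has rank ≤ 1. -/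
def Kset (n : ℕ) : Set (Matrix (Fin (n + 4)) (Fin (n + 4)) ℝ) :=
  {S | S.IsSymm ∧ (∀ g h : Fin (n + 4), 2 ≤ (g : ℕ) → 2 ≤ (h : ℕ) → g ≠ h → S g h = 0) ∧
    (Matrix.of fun (i : Fin 2) (j : Fin (n + 2)) =>
        S (Fin.castLE (by omega) i) ⟨(j : ℕ) + 2, by omega⟩).rank ≤ 1}

/-- The tetrad `t₀₁ t_{gh} − t_{0g} t_{1h}` (0-based indices). -/
noncomputable def tetradP (n : ℕ) (g h : Fin (n + 4)) : MvPolynomial (Fin (n + 4) × Fin (n + 4)) ℝ :=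
  X (0, 1) * X (g, h) - X (0, g) * X (1, h)

lemma Kset_minor (n : ℕ) (S : Matrix (Fin (n + 4)) (Fin (n + 4)) ℝ) (hK : S ∈ Kset n)
    (g h : Fin (n + 4)) (hg : 2 ≤ (g : ℕ)) (hh : 2 ≤ (h : ℕ)) :
    S 0 g * S 1 h - S 0 h * S 1 g = 0 := by
  obtain ⟨-, -, hr⟩ := hK
  have := minor_of_rank_le_one _ hr ⟨(g : ℕ) - 2, by omega⟩ ⟨(h : ℕ) - 2, by omega⟩
  simp only [Matrix.of_apply] at this
  have e0 : (Fin.castLE (show 2 ≤ n + 4 by omega) (0 : Fin 2)) = (0 : Fin (n + 4)) := rfl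
  have e1 : (Fin.castLE (show 2 ≤ n + 4 by omega) (1 : Fin 2)) = (1 : Fin (n + 4)) := rfl
  have eg : (⟨(g : ℕ) - 2 + 2, by omega⟩ : Fin (n + 4)) = g := by ext; simp; omega
  have eh : (⟨(h : ℕ) - 2 + 2, by omega⟩ : Fin (n + 4)) = h := by ext; simp; omega
  rw [e0, e1, eg, eh] at this
  exact this

theorem algebraic_tangent_cone_oneFactor (n : ℕ)
    (S₀ : Matrix (Fin (n + 4)) (Fin (n + 4)) ℝ) (hS : S₀ ∈ oneFactorSet (n + 4))
    (hoff : ∀ i j : Fin (n + 4), i ≠ j →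
      ¬((i = 0 ∧ j = 1) ∨ (i = 1 ∧ j = 0)) → S₀ i j = 0)
    (h12 : S₀ 0 1 ≠ 0) :
    -- (a) the tetrads t_{0g}t_{1h} − t_{0h}t_{1g} vanish identically on C and on F_{m,1}
    (∀ g h : Fin (n + 4), 2 ≤ (g : ℕ) → (g : ℕ) < (h : ℕ) →
      (∀ S ∈ Kset n, S 0 g * S 1 h - S 0 h * S 1 g = 0) ∧
      (∀ S ∈ oneFactorSet (n + 4), S 0 g * S 1 h - S 0 h * S 1 g = 0)) ∧
    -- (b) the lowest-degree term of the Σ-translate of t₀₁t_{gh} − t_{0g}t_{1h} is σ₀₁ t_{gh},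
    -- and it vanishes on C
    (∀ g h : Fin (n + 4), 2 ≤ (g : ℕ) → (g : ℕ) < (h : ℕ) →
      homogeneousComponent 0
          (bind₁ (fun p : Fin (n + 4) × Fin (n + 4) => X p + C (S₀ p.1 p.2)) (tetradP n g h))
        = 0 ∧
      homogeneousComponent 1
          (bind₁ (fun p : Fin (n + 4) × Fin (n + 4) => X p + C (S₀ p.1 p.2)) (tetradP n g h))
        = C (S₀ 0 1) * X (g, h) ∧
      ∀ S ∈ Kset n,
        eval (fun p : Fin (n + 4) × Fin (n + 4) => S p.1 p.2) (C (S₀ 0 1) * X (g, h)) = 0) ∧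
    -- consequently C is contained in the common zero set of these lowest-degree terms
    (∀ S ∈ Kset n, ∀ g h : Fin (n + 4), 2 ≤ (g : ℕ) → (g : ℕ) < (h : ℕ) →
      S 0 g * S 1 h - S 0 h * S 1 g = 0 ∧ S₀ 0 1 * S g h = 0) := by
  have v0 : ((0 : Fin (n + 4)) : ℕ) = 0 := rfl
  have v1 : ((1 : Fin (n + 4)) : ℕ) = 1 := rfl
  have key : ∀ g h : Fin (n + 4), 2 ≤ (g : ℕ) → (g : ℕ) < (h : ℕ) →
      S₀ 0 g = 0 ∧ S₀ 1 h = 0 ∧ S₀ g h = 0 := by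
    intro g h hg hgh
    have h0g : (0 : Fin (n + 4)) ≠ g := Fin.ne_of_val_ne (by omega)
    have h1h : (1 : Fin (n + 4)) ≠ h := Fin.ne_of_val_ne (by omega)
    have hgh' : g ≠ h := Fin.ne_of_val_ne (by omega)
    refine ⟨hoff 0 g h0g ?_, hoff 1 h h1h ?_, hoff g h hgh' ?_⟩ <;>
      (intro hcon; simp only [Fin.ext_iff, v0, v1] at hcon; omega)
  have partA : ∀ g h : Fin (n + 4), 2 ≤ (g : ℕ) → (g : ℕ) < (h : ℕ) →
      (∀ S ∈ Kset n, S 0 g * S 1 h - S 0 h * S 1 g = 0) ∧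
      (∀ S ∈ oneFactorSet (n + 4), S 0 g * S 1 h - S 0 h * S 1 g = 0) := by
    intro g h hg hgh
    constructor
    · intro S hK
      exact Kset_minor n S hK g h hg (by omega)
    · rintro S ⟨δ, Γ, -, rfl⟩
      have h0g : (0 : Fin (n + 4)) ≠ g := Fin.ne_of_val_ne (by omega)
      have h0h : (0 : Fin (n + 4)) ≠ h := Fin.ne_of_val_ne (by omega)
      have h1g : (1 : Fin (n + 4)) ≠ g := Fin.ne_of_val_ne (by omega)
      have h1h : (1 : Fin (n + 4)) ≠ h := Fin.ne_of_val_ne (by omega)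
      simp [Matrix.add_apply, Matrix.diagonal_apply_ne _ h0g, Matrix.diagonal_apply_ne _ h0h,
        Matrix.diagonal_apply_ne _ h1g, Matrix.diagonal_apply_ne _ h1h, Matrix.vecMulVec_apply]
      ring
  refine ⟨partA, ?_, ?_⟩
  · intro g h hg hgh
    obtain ⟨e0g, e1h, egh⟩ := key g h hg hgh
    have expand : (bind₁ (fun p : Fin (n + 4) × Fin (n + 4) => X p + C (S₀ p.1 p.2))
        (tetradP n g h)) = C (S₀ 0 1) * X (g, h) +
          (X (0, 1) * X (g, h) - X ((0 : Fin (n+4)), g) * X ((1 : Fin (n+4)), h)) := by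
      simp only [tetradP, map_sub, map_mul, bind₁_X_right]
      rw [e0g, e1h, egh]
      simp only [map_zero, add_zero]
      ring
    have hm1 : (C (S₀ 0 1) * X (g, h) : MvPolynomial (Fin (n + 4) × Fin (n + 4)) ℝ) ∈
        homogeneousSubmodule (Fin (n + 4) × Fin (n + 4)) ℝ 1 := by
      rw [mem_homogeneousSubmodule]
      simpa using (isHomogeneous_C _ (S₀ 0 1)).mul (isHomogeneous_X _ _)
    have hm2 : (X (0, 1) * X (g, h) : MvPolynomial (Fin (n + 4) × Fin (n + 4)) ℝ) ∈
        homogeneousSubmodule (Fin (n + 4) × Fin (n + 4)) ℝ 2 := by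
      rw [mem_homogeneousSubmodule]
      exact (isHomogeneous_X _ _).mul (isHomogeneous_X _ _)
    have hm3 : (X ((0 : Fin (n+4)), g) * X ((1 : Fin (n+4)), h) :
        MvPolynomial (Fin (n + 4) × Fin (n + 4)) ℝ) ∈
        homogeneousSubmodule (Fin (n + 4) × Fin (n + 4)) ℝ 2 := by
      rw [mem_homogeneousSubmodule]
      exact (isHomogeneous_X _ _).mul (isHomogeneous_X _ _)
    refine ⟨?_, ?_, ?_⟩
    · rw [expand, map_add, map_sub, homogeneousComponent_of_mem hm1,
        homogeneousComponent_of_mem hm2, homogeneousComponent_of_mem hm3]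
      simp
    · rw [expand, map_add, map_sub, homogeneousComponent_of_mem hm1,
        homogeneousComponent_of_mem hm2, homogeneousComponent_of_mem hm3]
      simp
    · intro S hK
      have hgh' : g ≠ h := Fin.ne_of_val_ne (by omega)
      have : S g h = 0 := hK.2.1 g h hg (by omega) hgh'
      simp [this]
  · intro S hK g h hg hgh
    refine ⟨(partA g h hg hgh).1 S hK, ?_⟩
    have hgh' : g ≠ h := Fin.ne_of_val_ne (by omega)
    rw [hK.2.1 g h hg (by omega) hgh', mul_zero]
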